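/- arXiv:2205.15806 — 7 statements merged into one kernel-verified Lean document; each statement's English description precedes it below -/
import Mathlib

section
/- Let X be a topological space and let α, β : ℝ/ℤ → X be continuous loops such that (i) α and β are not freely homotopic, and (ii) for every pair of continuous loops a, b : ℝ/ℤ → X with a freely homotopic to α and b freely homotopic to β, the images of a and b intersect. Then there do not exist a flow φ on X and points p, q ∈ X such that φ(1, p) = p, φ(1, q) = q, the trajectory loop γ_p is freely homotopic to α, and the trajectory loop γ_q is freely homotopic to β. -/
/-- Let `X` be a topological space and `α, β : ℝ/ℤ → X` continuous loops
such that (i) `α` and `β` are not freely homotopic, and (ii) any two continuous loops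
freely homotopic to `α` and to `β` respectively have intersecting images.
Then there is no flow `φ` on `X` with points `p, q` fixed by the time-1 map whose
trajectory loops are freely homotopic to `α` and `β` respectively.
(This is the topological content of the paper's Proposition 3.1.) -/
theorem no_flow_with_intersecting_classes
    (X : Type*) [TopologicalSpace X] (α β : C(UnitAddCircle, X))
    (hne : ¬ α.Homotopic β)
    (hint : ∀ a b : C(UnitAddCircle, X), a.Homotopic α → b.Homotopic β →
      (Set.range a ∩ Set.range b).Nonempty) :
    ¬ ∃ (φ : ℝ → X → X) (p q : X),
        Continuous (fun st : ℝ × X => φ st.1 st.2) ∧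
        (∀ x : X, φ 0 x = x) ∧
        (∀ s t : ℝ, ∀ x : X, φ (s + t) x = φ s (φ t x)) ∧
        φ 1 p = p ∧ φ 1 q = q ∧
        ∃ (Γp Γq : C(UnitAddCircle, X)),
          (∀ t : ℝ, Γp (t : UnitAddCircle) = φ t p) ∧
          (∀ t : ℝ, Γq (t : UnitAddCircle) = φ t q) ∧
          Γp.Homotopic α ∧ Γq.Homotopic β := by
  rintro ⟨φ, p, q, hcont, hzero, hadd, hp1, hq1, Γp, Γq, hΓp, hΓq, hpα, hqβ⟩
  obtain ⟨x, ⟨u, hu⟩, ⟨v, hv⟩⟩ := hint Γp Γq hpα hqβ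
  obtain ⟨s, rfl⟩ := QuotientAddGroup.mk_surjective u
  obtain ⟨t, rfl⟩ := QuotientAddGroup.mk_surjective v
  -- φ s p = φ t q
  have key : φ s p = φ t q := by
    rw [← hΓp s, ← hΓq t, hu, hv]
  set c : ℝ := t - s with hc
  have shift : ∀ r : ℝ, φ (r + c) q = φ r p := by
    intro r
    have h1 : r + c = (r - s) + t := by ring
    have h2 : r = (r - s) + s := by ring
    rw [h1, hadd, ← key, ← hadd, ← h2]
  -- homotopy from Γq to Γp
  have hcoe : Continuous (fun r : ℝ => (r : UnitAddCircle)) := continuous_quotient_mk'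
  have Hcont : Continuous (fun τu : unitInterval × UnitAddCircle =>
      Γq (τu.2 + (((τu.1 : ℝ) * c : ℝ) : UnitAddCircle))) := by
    refine Γq.continuous.comp (continuous_snd.add (hcoe.comp ?_))
    exact (continuous_subtype_val.comp continuous_fst).mul continuous_const
  have H : Γq.Homotopic Γp := by
    refine ⟨⟨⟨_, Hcont⟩, ?_, ?_⟩⟩
    · intro u
      simp
    · intro u
      obtain ⟨r, rfl⟩ := QuotientAddGroup.mk_surjective u
      show Γq ((r : UnitAddCircle) + (((1 : ℝ) * c : ℝ) : UnitAddCircle)) = Γp r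
      rw [one_mul, ← AddCircle.coe_add, hΓq, hΓp, shift]
  exact hne ((hpα.symm.trans H.symm).trans hqβ)
end

section
/- Let f, g : ℝ → ℝ × ℝ be continuous maps satisfying f(s + 1) = f(s) + (1, 0) for all s ∈ ℝ and g(t + 1) = g(t) + (0, 1) for all t ∈ ℝ. Then there exist s, t ∈ ℝ such that f(s) − g(t) ∈ ℤ × ℤ. -/
open Finset

section HVhelp

lemma hv_tele (N : ℕ) (u : ℕ → ZMod 2) :
    ∑ j ∈ Finset.range N, (u j + u (j + 1)) = u 0 + u N := by
  induction N with
  | zero => simp [CharTwo.add_self_eq_zero]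
  | succ n ih =>
    rw [Finset.sum_range_succ, ih]
    have h := CharTwo.add_self_eq_zero (u n)
    linear_combination h

lemma hv_parity (N : ℕ) (eh ev ed : ℕ → ℕ → ZMod 2) :
    ∑ i ∈ range N, ∑ j ∈ range N,
      ((eh i j + ev (i + 1) j + ed i j) + (ev i j + eh i (j + 1) + ed i j))
    = (∑ i ∈ range N, (eh i 0 + eh i N)) + ∑ j ∈ range N, (ev 0 j + ev N j) := by
  have hpt : ∀ i j, ((eh i j + ev (i + 1) j + ed i j) + (ev i j + eh i (j + 1) + ed i j))
      = (eh i j + eh i (j + 1)) + (ev i j + ev (i + 1) j) := by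
    intro i j
    have h := CharTwo.add_self_eq_zero (ed i j)
    linear_combination h
  calc ∑ i ∈ range N, ∑ j ∈ range N,
        ((eh i j + ev (i + 1) j + ed i j) + (ev i j + eh i (j + 1) + ed i j))
      = ∑ i ∈ range N, ((∑ j ∈ range N, (eh i j + eh i (j + 1)))
          + ∑ j ∈ range N, (ev i j + ev (i + 1) j)) := by
        refine Finset.sum_congr rfl fun i _ => ?_
        rw [← Finset.sum_add_distrib]
        exact Finset.sum_congr rfl fun j _ => hpt i j
    _ = (∑ i ∈ range N, (eh i 0 + eh i N))
          + ∑ i ∈ range N, ∑ j ∈ range N, (ev i j + ev (i + 1) j) := by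
        rw [Finset.sum_add_distrib]
        congr 1
        exact Finset.sum_congr rfl fun i _ => hv_tele N (fun j => eh i j)
    _ = (∑ i ∈ range N, (eh i 0 + eh i N)) + ∑ j ∈ range N, (ev 0 j + ev N j) := by
        congr 1
        rw [Finset.sum_comm]
        exact Finset.sum_congr rfl fun j _ => hv_tele N (fun i => ev i j)

def hvEE (a b : ℕ) : ZMod 2 := if (a = 0 ∧ b = 1) ∨ (a = 1 ∧ b = 0) then 1 else 0

lemma hvEE_cases (a b c : ℕ) (ha : a < 3) (hb : b < 3) (hc : c < 3)
    (h : hvEE a b + hvEE b c + hvEE a c ≠ 0) :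
    (a = 0 ∧ b = 1 ∧ c = 2) ∨ (a = 0 ∧ c = 1 ∧ b = 2) ∨ (b = 0 ∧ a = 1 ∧ c = 2) ∨
    (b = 0 ∧ c = 1 ∧ a = 2) ∨ (c = 0 ∧ a = 1 ∧ b = 2) ∨ (c = 0 ∧ b = 1 ∧ a = 2) := by
  interval_cases a <;> interval_cases b <;> interval_cases c <;> revert h <;> decide

/-- Two–dimensional Poincaré–Miranda theorem on the square `[-R,R]²`. -/
lemma hv_pm (G1 G2 : ℝ × ℝ → ℝ) (h1c : Continuous G1) (h2c : Continuous G2)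
    (R : ℝ) (hR : 0 < R)
    (hleft : ∀ t, G1 (-R, t) < 0) (hright : ∀ t, 0 < G1 (R, t))
    (hbot : ∀ s, 0 < G2 (s, -R)) (htop : ∀ s, G2 (s, R) < 0) :
    ∃ z : ℝ × ℝ, G1 z = 0 ∧ G2 z = 0 := by
  by_contra hno
  push_neg at hno
  set QQ : Set (ℝ × ℝ) := (Set.Icc (-R) R) ×ˢ (Set.Icc (-R) R) with hQQ
  have hQQc : IsCompact QQ := (isCompact_Icc).prod isCompact_Icc
  have hQQne : QQ.Nonempty :=
    ⟨(0, 0), ⟨⟨neg_nonpos.mpr hR.le, hR.le⟩, ⟨neg_nonpos.mpr hR.le, hR.le⟩⟩⟩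
  have hφc : Continuous fun z => max |G1 z| |G2 z| := (h1c.abs.max h2c.abs)
  obtain ⟨z₀, hz₀Q, hz₀min⟩ := hQQc.exists_isMinOn hQQne hφc.continuousOn
  set δ : ℝ := max |G1 z₀| |G2 z₀| with hδdef
  have hδnn : 0 ≤ δ := le_trans (abs_nonneg (G1 z₀)) (le_max_left _ _)
  have hδ0 : 0 < δ := by
    rcases hδnn.lt_or_eq with h | h
    · exact h
    · exfalso
      have e1 : G1 z₀ = 0 :=
        abs_eq_zero.mp (le_antisymm (h ▸ le_max_left _ _) (abs_nonneg _))
      have e2 : G2 z₀ = 0 :=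
        abs_eq_zero.mp (le_antisymm (h ▸ le_max_right _ _) (abs_nonneg _))
      exact hno z₀ e1 e2
  have hmin : ∀ z ∈ QQ, δ ≤ max |G1 z| |G2 z| := fun z hzq => hz₀min hzq
  obtain ⟨η₁, hη₁, hUC1⟩ := Metric.uniformContinuousOn_iff.mp
    (hQQc.uniformContinuousOn_of_continuous h1c.continuousOn) δ hδ0
  obtain ⟨η₂, hη₂, hUC2⟩ := Metric.uniformContinuousOn_iff.mp
    (hQQc.uniformContinuousOn_of_continuous h2c.continuousOn) δ hδ0
  set η : ℝ := min η₁ η₂ with hηdef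
  have hη0 : 0 < η := lt_min hη₁ hη₂
  obtain ⟨N, hNgt⟩ := exists_nat_gt (2 * R / η)
  have hN0 : 0 < (N : ℝ) := lt_trans (div_pos (by linarith) hη0) hNgt
  set mesh : ℝ := 2 * R / N with hmeshdef
  have hmesh0 : 0 ≤ mesh := by positivity
  have hmeshη : mesh < η := by
    rw [hmeshdef, div_lt_iff₀ hN0]
    have := (div_lt_iff₀ hη0).mp hNgt
    linarith
  set x : ℕ → ℝ := fun i => -R + 2 * R * i / N with hx
  set v : ℕ → ℕ → ℝ × ℝ := fun i j => (x i, x j) with hv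
  have hx0 : x 0 = -R := by simp [hx]
  have hxN : x N = R := by
    have hne : (N : ℝ) ≠ 0 := ne_of_gt hN0
    simp only [hx]
    field_simp
    ring
  have hxmem : ∀ i : ℕ, i ≤ N → x i ∈ Set.Icc (-R) R := by
    intro i hi
    have hiN : (i : ℝ) ≤ N := by exact_mod_cast hi
    constructor
    · have h1 : 0 ≤ 2 * R * i / N := by positivity
      simp only [hx]; linarith
    · simp only [hx]
      have h1 : 2 * R * i / N ≤ 2 * R := by
        rw [div_le_iff₀ hN0]; nlinarith
      linarith
  have hvmem : ∀ i j : ℕ, i ≤ N → j ≤ N → v i j ∈ QQ := by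
    intro i j hi hj
    exact ⟨hxmem i hi, hxmem j hj⟩
  have hD : ∀ i i' j j' : ℕ, i ≤ i' + 1 → i' ≤ i + 1 → j ≤ j' + 1 → j' ≤ j + 1 →
      dist (v i j) (v i' j') ≤ mesh := by
    have key : ∀ a b : ℕ, a ≤ b + 1 → b ≤ a + 1 → |x a - x b| ≤ mesh := by
      intro a b h1 h2
      have h1' : (a : ℝ) ≤ (b : ℝ) + 1 := by exact_mod_cast h1
      have h2' : (b : ℝ) ≤ (a : ℝ) + 1 := by exact_mod_cast h2
      have hd : x a - x b = (2 * R / N) * ((a : ℝ) - b) := by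
        simp only [hx]; field_simp; ring
      rw [hd, abs_mul, abs_of_nonneg (by positivity : (0:ℝ) ≤ 2 * R / N)]
      have hab : |(a : ℝ) - b| ≤ 1 := abs_le.mpr ⟨by linarith, by linarith⟩
      calc (2 * R / N) * |(a : ℝ) - b| ≤ (2 * R / N) * 1 :=
            mul_le_mul_of_nonneg_left hab (by positivity)
        _ = mesh := by rw [mul_one]
    intro i i' j j' hi1 hi2 hj1 hj2
    rw [Prod.dist_eq]
    apply max_le
    · rw [Real.dist_eq]; exact key i i' hi1 hi2
    · rw [Real.dist_eq]; exact key j j' hj1 hj2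
  -- labels
  set lab : ℝ × ℝ → ℕ := fun z => if G1 z < 0 then 0 else if G2 z < 0 then 2 else 1 with hlab
  have hlab3 : ∀ z, lab z < 3 := by
    intro z; simp only [hlab]; split_ifs <;> norm_num
  have hl0 : ∀ z, lab z = 0 → G1 z < 0 := by
    intro z h; simp only [hlab] at h; split_ifs at h with h1 h2 <;>
      first | exact h1 | exact absurd h (by decide)
  have hl1 : ∀ z, lab z = 1 → 0 ≤ G1 z ∧ 0 ≤ G2 z := by
    intro z h; simp only [hlab] at h; split_ifs at h with h1 h2 <;>
      first | exact ⟨not_lt.mp h1, not_lt.mp h2⟩ | exact absurd h (by decide)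
  have hl2 : ∀ z, lab z = 2 → G2 z < 0 := by
    intro z h; simp only [hlab] at h; split_ifs at h with h1 h2 <;>
      first | exact h2 | exact absurd h (by decide)
  have hmk0 : ∀ z, G1 z < 0 → lab z = 0 := by
    intro z h; simp only [hlab, if_pos h]
  have hmk1 : ∀ z, ¬(G1 z < 0) → ¬(G2 z < 0) → lab z = 1 := by
    intro z h1 h2; simp only [hlab, if_neg h1, if_neg h2]
  have hmk2 : ∀ z, ¬(G1 z < 0) → G2 z < 0 → lab z = 2 := by
    intro z h1 h2; simp only [hlab, if_neg h1, if_pos h2]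
  -- triangle lemma
  have htri : ∀ P Q R' : ℝ × ℝ, P ∈ QQ → Q ∈ QQ → R' ∈ QQ →
      dist P Q ≤ mesh → dist Q R' ≤ mesh → dist P R' ≤ mesh →
      hvEE (lab P) (lab Q) + hvEE (lab Q) (lab R') + hvEE (lab P) (lab R') = 0 := by
    intro P Q R' mP mQ mR dPQ dQR dPR
    by_contra hne
    have key : ∀ u0 u1 u2 : ℝ × ℝ, u0 ∈ QQ → u1 ∈ QQ → u2 ∈ QQ →
        dist u0 u1 ≤ mesh → dist u1 u2 ≤ mesh →
        lab u0 = 0 → lab u1 = 1 → lab u2 = 2 → False := by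
      intro u0 u1 u2 m0 m1 m2 d01 d12 e0 e1 e2
      have s0 := hl0 u0 e0
      obtain ⟨s1a, s1b⟩ := hl1 u1 e1
      have s2 := hl2 u2 e2
      have hd10 : dist u1 u0 < η₁ := by
        rw [dist_comm]
        exact lt_of_lt_of_le (lt_of_le_of_lt d01 hmeshη) (min_le_left _ _)
      have hd12 : dist u1 u2 < η₂ :=
        lt_of_lt_of_le (lt_of_le_of_lt d12 hmeshη) (min_le_right _ _)
      have e1' := hUC1 u1 m1 u0 m0 hd10
      have e2' := hUC2 u1 m1 u2 m2 hd12
      rw [Real.dist_eq] at e1' e2'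
      have b1 : G1 u1 < δ := by
        have := le_abs_self (G1 u1 - G1 u0); linarith
      have b2 : G2 u1 < δ := by
        have := le_abs_self (G2 u1 - G2 u2); linarith
      have hlt : max |G1 u1| |G2 u1| < δ :=
        max_lt (by rwa [abs_of_nonneg s1a]) (by rwa [abs_of_nonneg s1b])
      have := hmin u1 m1
      linarith
    rcases hvEE_cases _ _ _ (hlab3 P) (hlab3 Q) (hlab3 R') hne with
      ⟨e0, e1, e2⟩ | ⟨e0, e1, e2⟩ | ⟨e0, e1, e2⟩ | ⟨e0, e1, e2⟩ | ⟨e0, e1, e2⟩ | ⟨e0, e1, e2⟩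
    · exact key P Q R' mP mQ mR dPQ dQR e0 e1 e2
    · exact key P R' Q mP mR mQ dPR (by rw [dist_comm]; exact dQR) e0 e1 e2
    · exact key Q P R' mQ mP mR (by rw [dist_comm]; exact dPQ) dPR e0 e1 e2
    · exact key Q R' P mQ mR mP dQR (by rw [dist_comm]; exact dPR) e0 e1 e2
    · exact key R' P Q mR mP mQ (by rw [dist_comm]; exact dPR) dPQ e0 e1 e2
    · exact key R' Q P mR mQ mP (by rw [dist_comm]; exact dQR) (by rw [dist_comm]; exact dPQ) e0 e1 e2
  -- boundary signs at grid level
  have hsleft : ∀ j : ℕ, G1 (v 0 j) < 0 := by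
    intro j; simp only [hv, hx0]; exact hleft (x j)
  have hsright : ∀ j : ℕ, 0 < G1 (v N j) := by
    intro j; simp only [hv, hxN]; exact hright (x j)
  have hsbot : ∀ i : ℕ, 0 < G2 (v i 0) := by
    intro i; simp only [hv, hx0]; exact hbot (x i)
  have hstop : ∀ i : ℕ, G2 (v i N) < 0 := by
    intro i; simp only [hv, hxN]; exact htop (x i)
  -- edge functions
  set eh : ℕ → ℕ → ZMod 2 := fun i j => hvEE (lab (v i j)) (lab (v (i + 1) j)) with heh
  set ev : ℕ → ℕ → ZMod 2 := fun i j => hvEE (lab (v i j)) (lab (v i (j + 1))) with hevdef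
  set ed : ℕ → ℕ → ZMod 2 := fun i j => hvEE (lab (v i j)) (lab (v (i + 1) (j + 1))) with heddef
  have hpar := hv_parity N eh ev ed
  have hLHS : ∑ i ∈ range N, ∑ j ∈ range N,
      ((eh i j + ev (i + 1) j + ed i j) + (ev i j + eh i (j + 1) + ed i j)) = 0 := by
    refine Finset.sum_eq_zero fun i hi => Finset.sum_eq_zero fun j hj => ?_
    rw [Finset.mem_range] at hi hj
    have t1 : eh i j + ev (i + 1) j + ed i j = 0 := by
      simp only [heh, hevdef, heddef]
      exact htri (v i j) (v (i + 1) j) (v (i + 1) (j + 1))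
        (hvmem i j (by omega) (by omega)) (hvmem (i + 1) j (by omega) (by omega))
        (hvmem (i + 1) (j + 1) (by omega) (by omega))
        (hD i (i + 1) j j (by omega) (by omega) (by omega) (by omega))
        (hD (i + 1) (i + 1) j (j + 1) (by omega) (by omega) (by omega) (by omega))
        (hD i (i + 1) j (j + 1) (by omega) (by omega) (by omega) (by omega))
    have t2 : ev i j + eh i (j + 1) + ed i j = 0 := by
      simp only [heh, hevdef, heddef]
      exact htri (v i j) (v i (j + 1)) (v (i + 1) (j + 1))
        (hvmem i j (by omega) (by omega)) (hvmem i (j + 1) (by omega) (by omega))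
        (hvmem (i + 1) (j + 1) (by omega) (by omega))
        (hD i i j (j + 1) (by omega) (by omega) (by omega) (by omega))
        (hD i (i + 1) (j + 1) (j + 1) (by omega) (by omega) (by omega) (by omega))
        (hD i (i + 1) j (j + 1) (by omega) (by omega) (by omega) (by omega))
    rw [t1, t2, add_zero]
  -- bottom edge sum is 1
  have hbl : ∀ i : ℕ, lab (v i 0) = 0 ∨ lab (v i 0) = 1 := by
    intro i
    by_cases h1 : G1 (v i 0) < 0
    · exact Or.inl (hmk0 _ h1)
    · exact Or.inr (hmk1 _ h1 (not_lt.mpr (le_of_lt (hsbot i))))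
  have hB1 : ∑ i ∈ range N, eh i 0 = 1 := by
    set bb : ℕ → ZMod 2 := fun k => if lab (v k 0) = 1 then 1 else 0 with hbb
    have hstep : ∀ i ∈ range N, eh i 0 = bb i + bb (i + 1) := by
      intro i _
      simp only [heh, hbb]
      rcases hbl i with h0 | h0 <;> rcases hbl (i + 1) with h1 | h1 <;>
        rw [h0, h1] <;> decide
    rw [Finset.sum_congr rfl hstep, hv_tele]
    have hb0 : lab (v 0 0) = 0 := hmk0 _ (hsleft 0)
    have hbN : lab (v N 0) = 1 :=
      hmk1 _ (not_lt.mpr (le_of_lt (hsright 0))) (not_lt.mpr (le_of_lt (hsbot N)))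
    simp only [hbb]
    rw [hb0, hbN]
    decide
  -- top edge terms vanish
  have hB2 : ∀ i ∈ range N, eh i N = 0 := by
    have hbl' : ∀ i : ℕ, lab (v i N) = 0 ∨ lab (v i N) = 2 := by
      intro i
      by_cases h1 : G1 (v i N) < 0
      · exact Or.inl (hmk0 _ h1)
      · exact Or.inr (hmk2 _ h1 (hstop i))
    intro i _
    simp only [heh]
    rcases hbl' i with h0 | h0 <;> rcases hbl' (i + 1) with h1 | h1 <;>
      rw [h0, h1] <;> decide
  -- left edge terms vanish
  have hB3 : ∀ j ∈ range N, ev 0 j = 0 := by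
    intro j _
    simp only [hevdef]
    rw [hmk0 _ (hsleft j), hmk0 _ (hsleft (j + 1))]
    decide
  -- right edge terms vanish
  have hbr : ∀ j : ℕ, lab (v N j) = 1 ∨ lab (v N j) = 2 := by
    intro j
    by_cases h2 : G2 (v N j) < 0
    · exact Or.inr (hmk2 _ (not_lt.mpr (le_of_lt (hsright j))) h2)
    · exact Or.inl (hmk1 _ (not_lt.mpr (le_of_lt (hsright j))) h2)
  have hB4 : ∀ j ∈ range N, ev N j = 0 := by
    intro j _
    simp only [hevdef]
    rcases hbr j with h0 | h0 <;> rcases hbr (j + 1) with h1 | h1 <;>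
      rw [h0, h1] <;> decide
  rw [hLHS, Finset.sum_add_distrib, Finset.sum_add_distrib, hB1,
    Finset.sum_eq_zero hB2, Finset.sum_eq_zero hB3, Finset.sum_eq_zero hB4] at hpar
  exact absurd hpar (by decide)
lemma hv_bdd (h : ℝ → ℝ) (hc : Continuous h) (hp : ∀ x, h (x + 1) = h x) :
    ∃ M : ℝ, 0 ≤ M ∧ ∀ x, |h x| ≤ M := by
  have hper : Function.Periodic h 1 := hp
  obtain ⟨C, hC⟩ := (isCompact_Icc (a := (0 : ℝ)) (b := 1)).exists_bound_of_continuousOn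
    hc.continuousOn
  refine ⟨max C 0, le_max_right _ _, fun x => ?_⟩
  have h1 : h (Int.fract x) = h x := by
    have h0 := hper.sub_int_mul_eq (x := x) ⌊x⌋
    rw [mul_one] at h0
    rw [← Int.self_sub_floor]
    exact h0
  have h2 : Int.fract x ∈ Set.Icc (0 : ℝ) 1 :=
    ⟨Int.fract_nonneg x, (Int.fract_lt_one x).le⟩
  calc |h x| = ‖h (Int.fract x)‖ := by rw [h1, Real.norm_eq_abs]
    _ ≤ C := hC _ h2
    _ ≤ max C 0 := le_max_left _ _

end HVhelp

/-- If `f, g : ℝ → ℝ × ℝ` are continuous with `f (s+1) = f s + (1,0)` and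
`g (t+1) = g t + (0,1)` (lifts of a horizontal and a vertical loop on the torus
`(ℝ/ℤ)²`), then there are `s, t : ℝ` with `f s - g t ∈ ℤ × ℤ`, i.e. the projected
loops on the torus intersect. -/
theorem horizontal_vertical_loops_intersect
    (f g : ℝ → ℝ × ℝ) (hf : Continuous f) (hg : Continuous g)
    (hfper : ∀ s : ℝ, f (s + 1) = f s + (1, 0))
    (hgper : ∀ t : ℝ, g (t + 1) = g t + (0, 1)) :
    ∃ s t : ℝ, ∃ m n : ℤ, f s - g t = ((m : ℝ), (n : ℝ)) := by
  have hf1 : ∀ x : ℝ, (f (x + 1)).1 = (f x).1 + 1 := by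
    intro x; rw [hfper x]; rfl
  have hf2 : ∀ x : ℝ, (f (x + 1)).2 = (f x).2 := by
    intro x; rw [hfper x]; show (f x).2 + 0 = (f x).2; ring
  have hg1 : ∀ x : ℝ, (g (x + 1)).1 = (g x).1 := by
    intro x; rw [hgper x]; show (g x).1 + 0 = (g x).1; ring
  have hg2 : ∀ x : ℝ, (g (x + 1)).2 = (g x).2 + 1 := by
    intro x; rw [hgper x]; rfl
  obtain ⟨A, hA0, hA⟩ := hv_bdd (fun s => (f s).1 - s)
    ((continuous_fst.comp hf).sub continuous_id)
    (fun x => by show (f (x + 1)).1 - (x + 1) = (f x).1 - x; rw [hf1 x]; ring)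
  obtain ⟨B, hB0, hB⟩ := hv_bdd (fun t => (g t).1)
    (continuous_fst.comp hg) (fun x => hg1 x)
  obtain ⟨C, hC0, hC⟩ := hv_bdd (fun s => (f s).2)
    (continuous_snd.comp hf) (fun x => hf2 x)
  obtain ⟨D, hD0, hD⟩ := hv_bdd (fun t => (g t).2 - t)
    ((continuous_snd.comp hg).sub continuous_id)
    (fun x => by show (g (x + 1)).2 - (x + 1) = (g x).2 - x; rw [hg2 x]; ring)
  set R : ℝ := A + B + C + D + 1 with hRdef
  have hR : 0 < R := by rw [hRdef]; linarith
  have hpm := hv_pm (fun z => (f z.1).1 - (g z.2).1) (fun z => (f z.1).2 - (g z.2).2)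
    (((hf.comp continuous_fst).fst).sub ((hg.comp continuous_snd).fst))
    (((hf.comp continuous_fst).snd).sub ((hg.comp continuous_snd).snd))
    R hR
    (by
      intro t
      show (f (-R)).1 - (g t).1 < 0
      have h1 : -A ≤ (f (-R)).1 - (-R) ∧ (f (-R)).1 - (-R) ≤ A := abs_le.mp (hA (-R))
      have h2 : -B ≤ (g t).1 ∧ (g t).1 ≤ B := abs_le.mp (hB t)
      obtain ⟨h1a, h1b⟩ := h1; obtain ⟨h2a, h2b⟩ := h2
      rw [hRdef] at *; linarith)
    (by
      intro t
      show 0 < (f R).1 - (g t).1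
      have h1 : -A ≤ (f R).1 - R ∧ (f R).1 - R ≤ A := abs_le.mp (hA R)
      have h2 : -B ≤ (g t).1 ∧ (g t).1 ≤ B := abs_le.mp (hB t)
      obtain ⟨h1a, h1b⟩ := h1; obtain ⟨h2a, h2b⟩ := h2
      rw [hRdef] at *; linarith)
    (by
      intro s
      show 0 < (f s).2 - (g (-R)).2
      have h1 : -C ≤ (f s).2 ∧ (f s).2 ≤ C := abs_le.mp (hC s)
      have h2 : -D ≤ (g (-R)).2 - (-R) ∧ (g (-R)).2 - (-R) ≤ D := abs_le.mp (hD (-R))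
      obtain ⟨h1a, h1b⟩ := h1; obtain ⟨h2a, h2b⟩ := h2
      rw [hRdef] at *; linarith)
    (by
      intro s
      show (f s).2 - (g R).2 < 0
      have h1 : -C ≤ (f s).2 ∧ (f s).2 ≤ C := abs_le.mp (hC s)
      have h2 : -D ≤ (g R).2 - R ∧ (g R).2 - R ≤ D := abs_le.mp (hD R)
      obtain ⟨h1a, h1b⟩ := h1; obtain ⟨h2a, h2b⟩ := h2
      rw [hRdef] at *; linarith)
  obtain ⟨z, hz1, hz2⟩ := hpm
  refine ⟨z.1, z.2, 0, 0, ?_⟩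
  have e1 : (f z.1).1 - (g z.2).1 = 0 := hz1
  have e2 : (f z.1).2 - (g z.2).2 = 0 := hz2
  rw [Prod.ext_iff]
  constructor
  · simpa using e1
  · simpa using e2
end

section
/- Let v = (v₁, v₂) and w = (w₁, w₂) be vectors in ℤ × ℤ with v₁·w₂ − v₂·w₁ ≠ 0. Let f, g : ℝ → ℝ × ℝ be continuous maps satisfying f(s + 1) = f(s) + v for all s ∈ ℝ and g(t + 1) = g(t) + w for all t ∈ ℝ. Then there exist s, t ∈ ℝ such that f(s) − g(t) ∈ ℤ × ℤ. -/
/-!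
Put `F (s + t i) = f s - g t`, so that `F (z + 1) = F z + v` and `F (z + i) = F z - w`. As `v`
and `-w` are linearly independent, composing `F` with the real-linear isomorphism `ℝ² ≃ ℂ` sending
`v ↦ 1` and `-w ↦ i` gives a map `H : ℂ → ℂ` for which `H - id` is doubly periodic, hence bounded.
Such an `H` has a zero: otherwise `H = exp ∘ L` for a continuous `L`, because `ℂ` is simply
connected, so `H` winds `0` times around `0` along every circle; but along a circle of radius
larger than `sup ‖H - id‖` it winds once, like the identity.
-/

open Complex Set

theorem Complex.exists_norm_le_of_periodic {E : Type*} [SeminormedAddGroup E] {φ : ℂ → E}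
    (hφ : Continuous φ) (h1 : Function.Periodic φ 1) (hI : Function.Periodic φ I) :
    ∃ C, ∀ z, ‖φ z‖ ≤ C := by
  obtain ⟨C, hC⟩ := (isCompact_Icc.reProdIm isCompact_Icc :
    IsCompact (Icc (0 : ℝ) 1 ×ℂ Icc 0 1)).exists_bound_of_continuousOn hφ.continuousOn
  refine ⟨C, fun z ↦ ?_⟩
  have h_fract : φ z = φ (z - ⌊z.re⌋ * 1 - ⌊z.im⌋ * I) := by
    rw [hI.sub_int_mul_eq, h1.sub_int_mul_eq]
  rw [h_fract]
  apply hC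
  simp [mem_reProdIm, Int.self_sub_floor, Int.fract_nonneg, (Int.fract_lt_one _).le]

theorem exists_continuous_exp_comp_eq {X : Type*} [TopologicalSpace X] [SimplyConnectedSpace X]
    [LocallyPathConnectedSpace X] {H : X → ℂ} (hH : Continuous H) (h0 : ∀ x, H x ≠ 0) :
    ∃ L : X → ℂ, Continuous L ∧ ∀ x, exp (L x) = H x := by
  obtain ⟨x₀⟩ : Nonempty X := inferInstance
  obtain ⟨L, ⟨-, hL⟩, -⟩ :=
    isCoveringMapOn_exp.existsUnique_continuousMap_lifts ⟨H, hH⟩ (exp_log (h0 x₀)) h0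
  exact ⟨L, L.continuous, congrFun hL⟩

theorem Complex.exists_eq_zero_of_norm_sub_le {H : ℂ → ℂ} (hH : Continuous H) {M : ℝ}
    (hM : ∀ z, ‖H z - z‖ ≤ M) : ∃ z, H z = 0 := by
  by_contra! h0
  obtain ⟨L, hLc, hL⟩ := exists_continuous_exp_comp_eq hH h0
  obtain ⟨R, hMR, hR⟩ : ∃ R, M < R ∧ 0 < R :=
    ⟨M + 1, lt_add_one M, by linarith [(norm_nonneg _).trans (hM 0)]⟩
  set γ : ℝ → ℂ := fun θ ↦ R * exp (θ * I)
  have hγ_norm (θ : ℝ) : ‖γ θ‖ = R := by simp [γ, norm_exp_ofReal_mul_I, hR.le]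
  have hγ_ne (θ : ℝ) : γ θ ≠ 0 := norm_pos_iff.mp (by rw [hγ_norm]; exact hR)
  -- `H z / z` lies in the unit disc around `1`, where the principal `log` is continuous.
  have hq (θ : ℝ) : H (γ θ) / γ θ ∈ slitPlane := by
    have hnorm : ‖(H (γ θ) - γ θ) / γ θ‖ < 1 := by
      rw [norm_div, hγ_norm, div_lt_one hR]
      exact (hM (γ θ)).trans_lt hMR
    simpa [add_div, div_self (hγ_ne θ), sub_div] using mem_slitPlane_of_norm_lt_one hnorm
  set A : ℝ → ℂ := fun θ ↦ L (γ θ) - log (H (γ θ) / γ θ) - θ * I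
  have hA : Continuous A := by
    have hγc : Continuous γ := by fun_prop
    exact ((hLc.comp hγc).sub (((hH.comp hγc).div hγc hγ_ne).clog hq)).sub (by fun_prop)
  have hexpA (θ : ℝ) : exp (A θ) = R := by
    simp only [A, exp_sub, hL, exp_log (slitPlane_ne_zero (hq θ)), div_div_cancel₀ (h0 _), γ]
    exact mul_div_cancel_right₀ _ (exp_ne_zero _)
  -- `A` is a continuous choice of `log R`, hence constant, yet one turn changes it by `-2πi`.
  have hA_const := isCoveringMap_exp.const_of_comp hA
    (fun θ θ' ↦ Subtype.ext (by simp only [hexpA])) 0 (2 * Real.pi)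
  have hγ_period : γ (2 * Real.pi) = γ 0 := by simp [γ, exp_two_pi_mul_I]
  have : (2 * Real.pi : ℂ) * I = 0 := by
    simp only [A, hγ_period] at hA_const
    push_cast at hA_const
    linear_combination hA_const
  simp [Real.pi_ne_zero, I_ne_zero] at this

theorem exists_continuousLinearEquiv_map_one_map_I (a b : ℝ × ℝ)
    (hab : a.1 * b.2 - a.2 * b.1 ≠ 0) : ∃ ℓ : ℂ ≃L[ℝ] ℝ × ℝ, ℓ 1 = a ∧ ℓ I = b := by
  let ℓ₀ : ℂ →L[ℝ] ℝ × ℝ := reCLM.smulRight a + imCLM.smulRight b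
  have hℓ₀ : Function.Injective ℓ₀ := by
    refine (injective_iff_map_eq_zero ℓ₀).mpr fun z hz ↦ ?_
    simp only [ℓ₀, add_apply, ContinuousLinearMap.smulRight_apply,
      reCLM_apply, imCLM_apply, Prod.ext_iff, Prod.fst_add, Prod.snd_add, Prod.smul_fst,
      Prod.smul_snd, smul_eq_mul, Prod.fst_zero, Prod.snd_zero] at hz
    have hre : z.re * (a.1 * b.2 - a.2 * b.1) = 0 := by linear_combination b.2 * hz.1 - b.1 * hz.2
    have him : z.im * (a.1 * b.2 - a.2 * b.1) = 0 := by linear_combination a.1 * hz.2 - a.2 * hz.1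
    exact Complex.ext (by simpa [hab] using hre) (by simpa [hab] using him)
  refine ⟨(ℓ₀.toLinearMap.linearEquivOfInjective hℓ₀ (by simp)).toContinuousLinearEquiv, ?_, ?_⟩
    <;> simp [ℓ₀]

theorem exists_eq_zero_of_map_add_one_of_map_add_I {E : Type*} [AddCommGroup E] [Module ℝ E]
    [TopologicalSpace E] (ℓ : ℂ ≃L[ℝ] E) {F : ℂ → E} (hF : Continuous F)
    (h1 : ∀ z, F (z + 1) = F z + ℓ 1) (hI : ∀ z, F (z + I) = F z + ℓ I) : ∃ z, F z = 0 := by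
  obtain ⟨M, hM⟩ := Complex.exists_norm_le_of_periodic (φ := fun z ↦ ℓ.symm (F z) - z)
    (by fun_prop) (fun z ↦ by simp [h1]) (fun z ↦ by simp [hI])
  obtain ⟨z, hz⟩ := Complex.exists_eq_zero_of_norm_sub_le (ℓ.symm.continuous.comp hF) hM
  exact ⟨z, by simpa using hz⟩

/-- Let `v, w ∈ ℤ × ℤ` with `v₁·w₂ − v₂·w₁ ≠ 0`, and let
`f, g : ℝ → ℝ × ℝ` be continuous with `f (s+1) = f s + v`, `g (t+1) = g t + w`
(lifts of loops on the torus `(ℝ/ℤ)²` in the classes `v` and `w`).  Then there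
are `s, t : ℝ` with `f s - g t ∈ ℤ × ℤ`: loops on the torus with nonzero
homological intersection number must intersect. -/
theorem torus_loops_with_nonzero_intersection_number_intersect
    (v w : ℤ × ℤ) (hvw : v.1 * w.2 - v.2 * w.1 ≠ 0)
    (f g : ℝ → ℝ × ℝ) (hf : Continuous f) (hg : Continuous g)
    (hfper : ∀ s : ℝ, f (s + 1) = f s + ((v.1 : ℝ), (v.2 : ℝ)))
    (hgper : ∀ t : ℝ, g (t + 1) = g t + ((w.1 : ℝ), (w.2 : ℝ))) :
    ∃ s t : ℝ, ∃ m n : ℤ, f s - g t = ((m : ℝ), (n : ℝ)) := by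
  have hdet : (v.1 : ℝ) * -(w.2 : ℝ) - (v.2 : ℝ) * -(w.1 : ℝ) ≠ 0 := by
    have hvw' : ((v.1 * w.2 - v.2 * w.1 : ℤ) : ℝ) ≠ 0 := Int.cast_ne_zero.mpr hvw
    push_cast at hvw'
    contrapose! hvw'
    linear_combination -hvw'
  obtain ⟨ℓ, hℓ1, hℓI⟩ :=
    exists_continuousLinearEquiv_map_one_map_I ((v.1 : ℝ), (v.2 : ℝ)) (-((w.1 : ℝ), (w.2 : ℝ))) hdet
  obtain ⟨z, hz⟩ := exists_eq_zero_of_map_add_one_of_map_add_I ℓ (F := fun z ↦ f z.re - g z.im)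
    (by fun_prop)
    (fun z ↦ by simp only [add_re, add_im, one_re, one_im, add_zero, hfper, hℓ1]; abel)
    (fun z ↦ by simp only [add_re, add_im, I_re, I_im, add_zero, hgper, hℓI]; abel)
  exact ⟨z.re, z.im, 0, 0, by simp [hz, Prod.zero_eq_mk]⟩
end

section
/- Fix a differentiable function h : ℝ → ℝ whose derivative h' is 1-periodic and satisfies the eggbeater profile conditions, and let A > 1. Then the set {(x, y) ∈ [0, 1) × [0, 1) : h'(x) = 0 and A·h'(y) = 1} is exactly the four-element set {0, 1/2} × {1 − 1/(100A), 1/2 + 1/(100A)}. -/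
/-- Let `h : ℝ → ℝ` be differentiable with `1`-periodic derivative `h'`
satisfying the eggbeater profile conditions (`h'` continuous; `h'(t) = −100t` for
`|t| ≤ 0.01`; `h'(t) = 100(t − 1/2)` for `|t − 1/2| ≤ 0.01`; `h' = −5` on `[1/8, 3/8]`;
`h' = 5` on `[5/8, 7/8]`; `h'` strictly decreasing on `[−1/8, 1/8]` and strictly
increasing on `[3/8, 5/8]`), and let `A > 1`.  Then
`{(x, y) ∈ [0,1) × [0,1) : h'(x) = 0 ∧ A·h'(y) = 1}` is exactly the four-element set
`{0, 1/2} × {1 − 1/(100A), 1/2 + 1/(100A)}`. -/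
theorem eggbeater_horizontal_fixed_points
    (h : ℝ → ℝ) (hdiff : Differentiable ℝ h)
    (hper : ∀ t : ℝ, deriv h (t + 1) = deriv h t)
    (hcont : Continuous (deriv h))
    (hlin0 : ∀ t : ℝ, |t| ≤ 0.01 → deriv h t = -100 * t)
    (hlinhalf : ∀ t : ℝ, |t - 1/2| ≤ 0.01 → deriv h t = 100 * (t - 1/2))
    (hflatneg : ∀ t ∈ Set.Icc (1/8 : ℝ) (3/8), deriv h t = -5)
    (hflatpos : ∀ t ∈ Set.Icc (5/8 : ℝ) (7/8), deriv h t = 5)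
    (hanti : StrictAntiOn (deriv h) (Set.Icc (-(1/8) : ℝ) (1/8)))
    (hmono : StrictMonoOn (deriv h) (Set.Icc (3/8 : ℝ) (5/8)))
    (A : ℝ) (hA : 1 < A) :
    {p : ℝ × ℝ | p.1 ∈ Set.Ico (0 : ℝ) 1 ∧ p.2 ∈ Set.Ico (0 : ℝ) 1 ∧
        deriv h p.1 = 0 ∧ A * deriv h p.2 = 1} =
      ({0, 1/2} : Set ℝ) ×ˢ ({1 - 1/(100*A), 1/2 + 1/(100*A)} : Set ℝ) := by
  have hA0 : (0 : ℝ) < A := lt_trans one_pos hA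
  have hinvA0 : (0 : ℝ) < 1 / A := by positivity
  have hinvA1 : 1 / A < 1 := by rw [div_lt_one hA0]; exact hA
  have hq0 : (0 : ℝ) < 1 / (100 * A) := by positivity
  have hq1 : 1 / (100 * A) < 1 / 100 := by
    rw [div_lt_div_iff₀ (by positivity) (by norm_num)]; linarith
  -- value of deriv h at 0
  have hd0 : deriv h 0 = 0 := by
    have := hlin0 0 (by norm_num)
    simpa using this
  -- value at 1/2
  have hdhalf : deriv h (1/2 : ℝ) = 0 := by
    have := hlinhalf (1/2) (by norm_num)
    simpa using this
  -- value at -1/(100A)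
  have hdneg : deriv h (-(1 / (100 * A))) = 1 / A := by
    have := hlin0 (-(1 / (100 * A))) (by rw [abs_neg, abs_of_pos hq0]; linarith)
    rw [this]; field_simp
  -- value at 1/2 + 1/(100A)
  have hdpos : deriv h (1/2 + 1 / (100 * A)) = 1 / A := by
    have := hlinhalf (1/2 + 1 / (100 * A))
      (by rw [show (1:ℝ)/2 + 1/(100*A) - 1/2 = 1/(100*A) by ring, abs_of_pos hq0]
          linarith)
    rw [this]; field_simp; ring
  have hmemneg : -(1 / (100 * A)) ∈ Set.Icc (-(1/8) : ℝ) (1/8) := by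
    constructor <;> nlinarith
  have hmempos : (1/2 + 1 / (100 * A)) ∈ Set.Icc (3/8 : ℝ) (5/8) := by
    constructor <;> nlinarith
  have h0mem : (0 : ℝ) ∈ Set.Icc (-(1/8) : ℝ) (1/8) := by norm_num
  have hhalfmem : (1/2 : ℝ) ∈ Set.Icc (3/8 : ℝ) (5/8) := by norm_num
  ext ⟨x, y⟩
  simp only [Set.mem_setOf_eq, Set.mem_prod, Set.mem_insert_iff, Set.mem_singleton_iff,
    Set.mem_Ico]
  constructor
  · rintro ⟨⟨hx0, hx1⟩, ⟨hy0, hy1⟩, hdx, hdy⟩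
    have hdyv : deriv h y = 1 / A := by
      field_simp
      linarith [hdy]
    constructor
    · -- x = 0 ∨ x = 1/2
      rcases le_or_gt x (1/8) with hc | hc
      · left
        exact hanti.injOn ⟨by linarith, hc⟩ h0mem (by rw [hdx, hd0])
      rcases le_or_gt x (3/8) with hc2 | hc2
      · exfalso
        have := hflatneg x ⟨le_of_lt hc, hc2⟩
        rw [hdx] at this; norm_num at this
      rcases le_or_gt x (5/8) with hc3 | hc3
      · right
        exact hmono.injOn ⟨le_of_lt hc2, hc3⟩ hhalfmem (by rw [hdx, hdhalf])
      rcases le_or_gt x (7/8) with hc4 | hc4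
      · exfalso
        have := hflatpos x ⟨le_of_lt hc3, hc4⟩
        rw [hdx] at this; norm_num at this
      · exfalso
        have hp : deriv h (x - 1) = 0 := by
          have := hper (x - 1); rw [show x - 1 + 1 = x by ring] at this
          rw [← this, hdx]
        have : x - 1 = 0 :=
          hanti.injOn ⟨by linarith, by linarith⟩ h0mem (by rw [hp, hd0])
        linarith
    · -- y = 1 - 1/(100A) ∨ y = 1/2 + 1/(100A)
      rcases le_or_gt y (1/8) with hc | hc
      · exfalso
        rcases eq_or_lt_of_le hy0 with he | he
        · rw [← he, hd0] at hdyv; linarith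
        · have := hanti h0mem ⟨by linarith, hc⟩ he
          rw [hd0, hdyv] at this; linarith
      rcases le_or_gt y (3/8) with hc2 | hc2
      · exfalso
        have := hflatneg y ⟨le_of_lt hc, hc2⟩
        rw [hdyv] at this; linarith
      rcases le_or_gt y (5/8) with hc3 | hc3
      · right
        exact hmono.injOn ⟨le_of_lt hc2, hc3⟩ hmempos (by rw [hdyv, hdpos])
      rcases le_or_gt y (7/8) with hc4 | hc4
      · exfalso
        have := hflatpos y ⟨le_of_lt hc3, hc4⟩
        rw [hdyv] at this; linarith
      · left
        have hp : deriv h (y - 1) = 1 / A := by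
          have := hper (y - 1); rw [show y - 1 + 1 = y by ring] at this
          rw [← this, hdyv]
        have : y - 1 = -(1 / (100 * A)) :=
          hanti.injOn ⟨by linarith, by linarith⟩ hmemneg (by rw [hp, hdneg])
        linarith
  · rintro ⟨hx, hy⟩
    have hxv : deriv h x = 0 := by
      rcases hx with rfl | rfl
      · exact hd0
      · exact hdhalf
    have hyv : deriv h y = 1 / A := by
      rcases hy with rfl | rfl
      · have := hper (-(1 / (100 * A)))
        rw [show -(1 / (100 * A)) + 1 = 1 - 1/(100*A) by ring] at this
        rw [this, hdneg]
      · exact hdpos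
    refine ⟨?_, ?_, hxv, by rw [hyv]; field_simp⟩
    · rcases hx with rfl | rfl <;> constructor <;> norm_num
    · rcases hy with rfl | rfl <;> constructor <;> nlinarith
end

section
/- Fix a differentiable function h : ℝ → ℝ whose derivative h' is 1-periodic and satisfies the eggbeater profile conditions, and let A > 1. Then the set {(x, y) ∈ [0, 1) × [0, 1) : h'(y) = 0 and 2A·h'(x) = −1} is exactly the four-element set {1/(200A), 1/2 − 1/(200A)} × {0, 1/2}. -/
/-- Let `h : ℝ → ℝ` be differentiable with `1`-periodic derivative `h'`
satisfying the eggbeater profile conditions (`h'` continuous; `h'(t) = −100t` for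
`|t| ≤ 0.01`; `h'(t) = 100(t − 1/2)` for `|t − 1/2| ≤ 0.01`; `h' = −5` on `[1/8, 3/8]`;
`h' = 5` on `[5/8, 7/8]`; `h'` strictly decreasing on `[−1/8, 1/8]` and strictly
increasing on `[3/8, 5/8]`), and let `A > 1`.  Then
`{(x, y) ∈ [0,1) × [0,1) : h'(y) = 0 ∧ 2A·h'(x) = −1}` is exactly the four-element set
`{1/(200A), 1/2 − 1/(200A)} × {0, 1/2}`. -/
theorem eggbeater_vertical_fixed_points
    (h : ℝ → ℝ) (hdiff : Differentiable ℝ h)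
    (hper : ∀ t : ℝ, deriv h (t + 1) = deriv h t)
    (hcont : Continuous (deriv h))
    (hlin0 : ∀ t : ℝ, |t| ≤ 0.01 → deriv h t = -100 * t)
    (hlinhalf : ∀ t : ℝ, |t - 1/2| ≤ 0.01 → deriv h t = 100 * (t - 1/2))
    (hflatneg : ∀ t ∈ Set.Icc (1/8 : ℝ) (3/8), deriv h t = -5)
    (hflatpos : ∀ t ∈ Set.Icc (5/8 : ℝ) (7/8), deriv h t = 5)
    (hanti : StrictAntiOn (deriv h) (Set.Icc (-(1/8) : ℝ) (1/8)))
    (hmono : StrictMonoOn (deriv h) (Set.Icc (3/8 : ℝ) (5/8)))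
    (A : ℝ) (hA : 1 < A) :
    {p : ℝ × ℝ | p.1 ∈ Set.Ico (0 : ℝ) 1 ∧ p.2 ∈ Set.Ico (0 : ℝ) 1 ∧
        deriv h p.2 = 0 ∧ 2 * A * deriv h p.1 = -1} =
      ({1/(200*A), 1/2 - 1/(200*A)} : Set ℝ) ×ˢ ({0, 1/2} : Set ℝ) := by
  have hA0 : (0:ℝ) < A := by linarith
  have hAne : (A:ℝ) ≠ 0 := ne_of_gt hA0
  set g := deriv h with hg
  have g0 : g 0 = 0 := by
    have := hlin0 0 (by norm_num); simpa using this
  have ghalf : g (1/2) = 0 := by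
    have := hlinhalf (1/2) (by norm_num); simpa using this
  have hx1small : (1:ℝ)/(200*A) < 1/200 := by
    rw [div_lt_div_iff₀ (by positivity) (by norm_num)]; nlinarith
  have hx1pos : (0:ℝ) < 1/(200*A) := by positivity
  have hx1mem : (1/(200*A) : ℝ) ∈ Set.Icc (0:ℝ) (1/8) := ⟨le_of_lt hx1pos, by linarith⟩
  have gx1 : g (1/(200*A)) = -1/(2*A) := by
    rw [hlin0 _ (by rw [abs_of_nonneg hx1mem.1]; exact le_trans hx1small.le (by norm_num))]
    field_simp; ring
  have hx2mem : (1/2 - 1/(200*A) : ℝ) ∈ Set.Icc (3/8:ℝ) (5/8) := by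
    constructor <;> [linarith; linarith]
  have gx2 : g (1/2 - 1/(200*A)) = -1/(2*A) := by
    rw [hlinhalf _ (by rw [show (1/2 - 1/(200*A) - 1/2 : ℝ) = -(1/(200*A)) by ring,
      abs_neg, abs_of_nonneg hx1mem.1]; exact le_trans hx1small.le (by norm_num))]
    field_simp; ring
  have locate : ∀ t : ℝ, 0 ≤ t → t < 1 → g t ≤ 0 → g t ≠ -5 →
      t ∈ Set.Icc (0:ℝ) (1/8) ∨ t ∈ Set.Icc (3/8:ℝ) (5/8) := by
    intro t ht0 ht1 hle hne
    rcases le_or_gt t (1/8) with h1 | h1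
    · exact Or.inl ⟨ht0, h1⟩
    rcases le_or_gt t (3/8) with h2 | h2
    · exact absurd (hflatneg t ⟨h1.le, h2⟩) hne
    rcases le_or_gt t (5/8) with h3 | h3
    · exact Or.inr ⟨h2.le, h3⟩
    rcases le_or_gt t (7/8) with h4 | h4
    · have := hflatpos t ⟨h3.le, h4⟩; linarith
    · have hper' : g t = g (t - 1) := by
        have := hper (t - 1); rw [sub_add_cancel] at this; exact this
      have hmem1 : t - 1 ∈ Set.Icc (-(1/8):ℝ) (1/8) := ⟨by linarith, by linarith⟩
      have hmem0 : (0:ℝ) ∈ Set.Icc (-(1/8):ℝ) (1/8) := ⟨by norm_num, by norm_num⟩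
      have hgt : g 0 < g (t - 1) := hanti hmem1 hmem0 (by linarith)
      rw [g0] at hgt
      rw [hper'] at hle
      linarith
  ext ⟨x, y⟩
  simp only [Set.mem_setOf_eq, Set.mem_prod, Set.mem_insert_iff, Set.mem_singleton_iff,
    Set.mem_Ico]
  constructor
  · rintro ⟨⟨hx0, hx1⟩, ⟨hy0, hy1⟩, hgy, hgx⟩
    constructor
    · -- x part
      have hgxval : g x = -1/(2*A) := by
        field_simp
        linear_combination hgx
      have hneg : g x ≤ 0 := by
        rw [hgxval, neg_div]
        have : (0:ℝ) < 1/(2*A) := by positivity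
        linarith
      have hne5 : g x ≠ -5 := by
        rw [hgxval]; intro heq
        have : (-1 : ℝ) = -5 * (2*A) := by
          field_simp at heq; linarith
        nlinarith
      rcases locate x hx0 hx1 hneg hne5 with hc | hc
      · left
        have hxm : x ∈ Set.Icc (-(1/8):ℝ) (1/8) := ⟨by linarith [hc.1], hc.2⟩
        have hx1m : (1/(200*A):ℝ) ∈ Set.Icc (-(1/8):ℝ) (1/8) := ⟨by linarith, hx1mem.2⟩
        exact hanti.injOn hxm hx1m (by rw [hgxval, gx1])
      · right
        exact hmono.injOn hc hx2mem (by rw [hgxval, gx2])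
    · -- y part
      have hne5 : g y ≠ -5 := by rw [hgy]; norm_num
      rcases locate y hy0 hy1 (le_of_eq hgy) hne5 with hc | hc
      · left
        have hym : y ∈ Set.Icc (-(1/8):ℝ) (1/8) := ⟨by linarith [hc.1], hc.2⟩
        have h0m : (0:ℝ) ∈ Set.Icc (-(1/8):ℝ) (1/8) := ⟨by norm_num, by norm_num⟩
        exact hanti.injOn hym h0m (by rw [hgy, g0])
      · right
        have hhm : (1/2:ℝ) ∈ Set.Icc (3/8:ℝ) (5/8) := ⟨by norm_num, by norm_num⟩
        exact hmono.injOn hc hhm (by rw [hgy, ghalf])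
  · rintro ⟨hx | hx, hy | hy⟩ <;> subst hx <;> subst hy
    · exact ⟨⟨hx1pos.le, by linarith⟩, ⟨le_refl 0, by norm_num⟩, g0, by rw [gx1]; field_simp⟩
    · exact ⟨⟨hx1pos.le, by linarith⟩, ⟨by norm_num, by norm_num⟩, ghalf, by rw [gx1]; field_simp⟩
    · exact ⟨⟨by linarith, by linarith⟩, ⟨le_refl 0, by norm_num⟩, g0, by rw [gx2]; field_simp⟩
    · exact ⟨⟨by linarith, by linarith⟩, ⟨by norm_num, by norm_num⟩, ghalf, by rw [gx2]; field_simp⟩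
end

section
/- Fix a differentiable function h : ℝ → ℝ whose derivative h' is 1-periodic and satisfies the eggbeater profile conditions, and let A > 1. Then there exist points p, q ∈ ℝ² such that the lifted eggbeater map satisfies G_A(p) = p + (1, 0) and G_A(q) = q + (0, 1); that is, the induced eggbeater map on the torus (ℝ/ℤ)² has a fixed point in the free homotopy class of the horizontal loop and a fixed point in the free homotopy class of the vertical loop. -/
/-- The lifted flow `Φ_A (x, y) = (x + A·h'(y), y)`. -/
noncomputable def PhiLift (h : ℝ → ℝ) (A : ℝ) : ℝ × ℝ → ℝ × ℝ :=
  fun p => (p.1 + A * deriv h p.2, p.2)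

/-- The lifted flow `Ψ_{2A} (x, y) = (x, y − 2A·h'(x))`. -/
noncomputable def PsiLift (h : ℝ → ℝ) (A : ℝ) : ℝ × ℝ → ℝ × ℝ :=
  fun p => (p.1, p.2 - 2 * A * deriv h p.1)

/-- The lifted eggbeater map `G_A = Ψ_{2A} ∘ Φ_A`. -/
noncomputable def EggbeaterLift (h : ℝ → ℝ) (A : ℝ) : ℝ × ℝ → ℝ × ℝ :=
  PsiLift h A ∘ PhiLift h A

/-!
Both translated fixed points come from the linear piece `h'(t) = -100 t` near `0`.
At `p = (-1, -1/(100A))` the shear `Φ_A` moves `p` one unit to the right, onto the line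
`x = 0` where `h' = 0`, so `Ψ_{2A}` does nothing. At `q = (1/(200A), 0)` the shear `Φ_A`
does nothing and `Ψ_{2A}` moves `q` one unit up. Both coordinates lie in the linear range
because `A ≥ 1`.
-/

theorem eggbeaterLift_apply (h : ℝ → ℝ) (A x y : ℝ) :
    EggbeaterLift h A (x, y) =
      (x + A * deriv h y, y - 2 * A * deriv h (x + A * deriv h y)) :=
  rfl

theorem eggbeaterLift_eq_add_horizontal {h : ℝ → ℝ} {A x y : ℝ}
    (hy : A * deriv h y = 1) (hx : deriv h (x + 1) = 0) :
    EggbeaterLift h A (x, y) = (x, y) + ((1 : ℝ), (0 : ℝ)) := by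
  rw [eggbeaterLift_apply, hy, hx, Prod.mk_add_mk]
  simp

theorem eggbeaterLift_eq_add_vertical {h : ℝ → ℝ} {A x y : ℝ}
    (hy : deriv h y = 0) (hx : 2 * A * deriv h x = -1) :
    EggbeaterLift h A (x, y) = (x, y) + ((0 : ℝ), (1 : ℝ)) := by
  rw [eggbeaterLift_apply, hy, mul_zero, add_zero, hx, Prod.mk_add_mk]
  simp [sub_eq_add_neg]

theorem eggbeater_has_horizontal_and_vertical_fixed_points_general
    (h : ℝ → ℝ)
    (hlin0 : ∀ t : ℝ, |t| ≤ 0.01 → deriv h t = -100 * t)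
    (A : ℝ) (hA : 1 < A) :
    ∃ p q : ℝ × ℝ,
      EggbeaterLift h A p = p + ((1 : ℝ), (0 : ℝ)) ∧
      EggbeaterLift h A q = q + ((0 : ℝ), (1 : ℝ)) := by
  have hA0 : 0 < A := by linarith
  have hsmall : ∀ c : ℝ, 1 ≤ c → |1 / (100 * c * A)| ≤ 0.01 := fun c hc => by
    rw [abs_of_pos (by positivity), div_le_iff₀ (by positivity)]
    nlinarith
  have hzero : deriv h 0 = 0 := by simpa using hlin0 0 (by norm_num)
  have hleft : A * deriv h (-(1 / (100 * 1 * A))) = 1 := by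
    rw [hlin0 _ (by rw [abs_neg]; exact hsmall 1 le_rfl)]
    field_simp
  have hright : 2 * A * deriv h (1 / (100 * 2 * A)) = -1 := by
    rw [hlin0 _ (hsmall 2 one_le_two)]
    field_simp
  exact ⟨_, _, eggbeaterLift_eq_add_horizontal hleft (by rwa [neg_add_cancel]),
    eggbeaterLift_eq_add_vertical hzero hright⟩

/-- Let `h : ℝ → ℝ` be differentiable with `1`-periodic derivative `h'`
satisfying the eggbeater profile conditions, and let `A > 1`.  Then there exist
`p, q ∈ ℝ²` with `G_A p = p + (1, 0)` and `G_A q = q + (0, 1)`: the induced eggbeater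
map on the torus `(ℝ/ℤ)²` has a fixed point in the free homotopy class of the
horizontal loop and one in the class of the vertical loop. -/
theorem eggbeater_has_horizontal_and_vertical_fixed_points
    (h : ℝ → ℝ) (hdiff : Differentiable ℝ h)
    (hper : ∀ t : ℝ, deriv h (t + 1) = deriv h t)
    (hcont : Continuous (deriv h))
    (hlin0 : ∀ t : ℝ, |t| ≤ 0.01 → deriv h t = -100 * t)
    (hlinhalf : ∀ t : ℝ, |t - 1/2| ≤ 0.01 → deriv h t = 100 * (t - 1/2))
    (hflatneg : ∀ t ∈ Set.Icc (1/8 : ℝ) (3/8), deriv h t = -5)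
    (hflatpos : ∀ t ∈ Set.Icc (5/8 : ℝ) (7/8), deriv h t = 5)
    (hanti : StrictAntiOn (deriv h) (Set.Icc (-(1/8) : ℝ) (1/8)))
    (hmono : StrictMonoOn (deriv h) (Set.Icc (3/8 : ℝ) (5/8)))
    (A : ℝ) (hA : 1 < A) :
    ∃ p q : ℝ × ℝ,
      EggbeaterLift h A p = p + ((1 : ℝ), (0 : ℝ)) ∧
      EggbeaterLift h A q = q + ((0 : ℝ), (1 : ℝ)) :=
  eggbeater_has_horizontal_and_vertical_fixed_points_general h hlin0 A hA
end

section
/- Fix a function h : ℝ → ℝ such that its derivative h' is differentiable with derivative h''. Then for every A > 0 and every (x, y) ∈ ℝ², the lifted eggbeater map G_A is differentiable at (x, y), its derivative is the linear map with matrix M = [[1, A·h''(y)], [−2A·h''(x̃), 1 − 2A²·h''(x̃)·h''(y)]] where x̃ = x + A·h'(y); moreover det(M) = 1 and det(M − I) = 2A²·h''(x̃)·h''(y). In particular, if G_A(x, y) = (x, y) + (m, n) for some integers m, n and h''(x̃) ≠ 0 and h''(y) ≠ 0, then 1 is not an eigenvalue of the derivative of G_A at (x, y), i.e. the corresponding fixed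 point of the induced torus map is non-degenerate. -/
/-- The Jacobian matrix `M = [[1, A·h''(y)], [−2A·h''(x̃), 1 − 2A²·h''(x̃)·h''(y)]]`
of the lifted eggbeater map at `(x, y)`, where `x̃ = x + A·h'(y)` and
`h'' = deriv (deriv h)`. -/
noncomputable def EggbeaterJacobian (h : ℝ → ℝ) (A : ℝ) (x y : ℝ) :
    Matrix (Fin 2) (Fin 2) ℝ :=
  !![1, A * deriv (deriv h) y;
     -(2 * A) * deriv (deriv h) (x + A * deriv h y),
     1 - 2 * A ^ 2 * deriv (deriv h) (x + A * deriv h y) * deriv (deriv h) y]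


/-!
`G_A` is the composition of the horizontal shear `Φ_A` and the vertical shear `Ψ_{2A}`, so by
the chain rule its Jacobian is the product of a lower and an upper unipotent matrix and has
determinant `1`. A direct computation gives `det (M - I) = 2A²·h''(x̃)·h''(y)`, which is nonzero
under the hypotheses, so `M - I` is injective (Cramer's rule) and `1` is not an eigenvalue.
-/

namespace Matrix

noncomputable def toProdCLM (M : Matrix (Fin 2) (Fin 2) ℝ) : ℝ × ℝ →L[ℝ] ℝ × ℝ :=
  (M 0 0 • ContinuousLinearMap.fst ℝ ℝ ℝ + M 0 1 • ContinuousLinearMap.snd ℝ ℝ ℝ).prod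
    (M 1 0 • ContinuousLinearMap.fst ℝ ℝ ℝ + M 1 1 • ContinuousLinearMap.snd ℝ ℝ ℝ)

@[simp]
theorem toProdCLM_apply (M : Matrix (Fin 2) (Fin 2) ℝ) (v : ℝ × ℝ) :
    M.toProdCLM v = (M 0 0 * v.1 + M 0 1 * v.2, M 1 0 * v.1 + M 1 1 * v.2) :=
  rfl

theorem toProdCLM_mul (M N : Matrix (Fin 2) (Fin 2) ℝ) :
    (M * N).toProdCLM = M.toProdCLM.comp N.toProdCLM := by
  ext <;> simp [mul_apply, Fin.sum_univ_two]

theorem eq_zero_of_toProdCLM_apply_eq_self {M : Matrix (Fin 2) (Fin 2) ℝ}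
    (hM : (M - 1).det ≠ 0) {v : ℝ × ℝ} (hv : M.toProdCLM v = v) : v = 0 := by
  have hdet : (M - 1).det = (M 0 0 - 1) * (M 1 1 - 1) - M 0 1 * M 1 0 := by
    simp [det_fin_two]
  rw [hdet] at hM
  obtain ⟨h1, h2⟩ := Prod.ext_iff.1 hv
  simp only [toProdCLM_apply] at h1 h2
  -- Cramer's rule for `(M - 1) v = 0`
  have hv1 : ((M 0 0 - 1) * (M 1 1 - 1) - M 0 1 * M 1 0) * v.1 = 0 := by
    linear_combination (M 1 1 - 1) * h1 - M 0 1 * h2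
  have hv2 : ((M 0 0 - 1) * (M 1 1 - 1) - M 0 1 * M 1 0) * v.2 = 0 := by
    linear_combination (M 0 0 - 1) * h2 - M 1 0 * h1
  exact Prod.ext ((mul_eq_zero.1 hv1).resolve_left hM) ((mul_eq_zero.1 hv2).resolve_left hM)

end Matrix

section Eggbeater

variable (h : ℝ → ℝ) (A : ℝ)

theorem hasFDerivAt_phiLift {x y : ℝ} (hy : DifferentiableAt ℝ (deriv h) y) :
    HasFDerivAt (PhiLift h A) (!![1, A * deriv (deriv h) y; 0, 1]).toProdCLM (x, y) := by
  have hderiv := hy.hasDerivAt.comp_hasFDerivAt (x, y) (hasFDerivAt_snd (𝕜 := ℝ) (p := (x, y)))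
  have h1 := hasFDerivAt_fst.add (hderiv.const_mul A)
  refine (h1.prodMk hasFDerivAt_snd).congr_fderiv ?_
  ext <;> simp

theorem hasFDerivAt_psiLift {x y : ℝ} (hx : DifferentiableAt ℝ (deriv h) x) :
    HasFDerivAt (PsiLift h A) (!![1, 0; -(2 * A) * deriv (deriv h) x, 1]).toProdCLM (x, y) := by
  have hderiv := hx.hasDerivAt.comp_hasFDerivAt (x, y) (hasFDerivAt_fst (𝕜 := ℝ) (p := (x, y)))
  have h2 := hasFDerivAt_snd.sub (hderiv.const_mul (2 * A))
  refine (hasFDerivAt_fst.prodMk h2).congr_fderiv ?_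
  ext <;> simp

theorem eggbeaterJacobian_eq_mul (x y : ℝ) :
    EggbeaterJacobian h A x y =
      !![1, 0; -(2 * A) * deriv (deriv h) (x + A * deriv h y), 1] *
        !![1, A * deriv (deriv h) y; 0, 1] := by
  rw [EggbeaterJacobian, Matrix.mul_fin_two]
  ring_nf

theorem hasFDerivAt_eggbeaterLift {x y : ℝ} (hy : DifferentiableAt ℝ (deriv h) y)
    (hx : DifferentiableAt ℝ (deriv h) (x + A * deriv h y)) :
    HasFDerivAt (EggbeaterLift h A) (EggbeaterJacobian h A x y).toProdCLM (x, y) := by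
  rw [eggbeaterJacobian_eq_mul, Matrix.toProdCLM_mul]
  exact (hasFDerivAt_psiLift h A hx).comp (x, y) (hasFDerivAt_phiLift h A hy)

theorem det_eggbeaterJacobian (x y : ℝ) : (EggbeaterJacobian h A x y).det = 1 := by
  rw [eggbeaterJacobian_eq_mul, Matrix.det_mul]
  simp [Matrix.det_fin_two]

theorem det_eggbeaterJacobian_sub_one (x y : ℝ) :
    (EggbeaterJacobian h A x y - 1).det =
      2 * A ^ 2 * deriv (deriv h) (x + A * deriv h y) * deriv (deriv h) y := by
  simp [EggbeaterJacobian, Matrix.det_fin_two]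
  ring

end Eggbeater

theorem eggbeater_fixed_points_nondegenerate_general
    (h : ℝ → ℝ) (hd2 : Differentiable ℝ (deriv h))
    (A : ℝ) (hA : 0 < A) (x y : ℝ) :
    ∃ L : ℝ × ℝ →L[ℝ] ℝ × ℝ,
      HasFDerivAt (EggbeaterLift h A) L (x, y) ∧
      (∀ v : ℝ × ℝ,
        L v = (EggbeaterJacobian h A x y 0 0 * v.1 + EggbeaterJacobian h A x y 0 1 * v.2,
               EggbeaterJacobian h A x y 1 0 * v.1 + EggbeaterJacobian h A x y 1 1 * v.2)) ∧
      (EggbeaterJacobian h A x y).det = 1 ∧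
      (EggbeaterJacobian h A x y - 1).det =
        2 * A ^ 2 * deriv (deriv h) (x + A * deriv h y) * deriv (deriv h) y ∧
      ((∃ m n : ℤ, EggbeaterLift h A (x, y) = (x + (m : ℝ), y + (n : ℝ))) →
        deriv (deriv h) (x + A * deriv h y) ≠ 0 → deriv (deriv h) y ≠ 0 →
        ∀ v : ℝ × ℝ, L v = v → v = 0) := by
  refine ⟨(EggbeaterJacobian h A x y).toProdCLM, hasFDerivAt_eggbeaterLift h A (hd2 _) (hd2 _),
    fun v => rfl, det_eggbeaterJacobian h A x y, det_eggbeaterJacobian_sub_one h A x y, ?_⟩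
  intro _ hx' hy v hv
  refine Matrix.eq_zero_of_toProdCLM_apply_eq_self ?_ hv
  rw [det_eggbeaterJacobian_sub_one]
  exact mul_ne_zero (mul_ne_zero (by positivity) hx') hy

/-- Let `h : ℝ → ℝ` have a differentiable derivative `h'` (with
derivative `h''`).  For every `A > 0` and every `(x, y) ∈ ℝ²`, the lifted
eggbeater map `G_A` is differentiable at `(x, y)` with derivative the linear map
with matrix `M = EggbeaterJacobian h A x y`; moreover `det M = 1` and
`det (M − I) = 2A²·h''(x̃)·h''(y)` where `x̃ = x + A·h'(y)`.  In particular, if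
`G_A (x, y) = (x, y) + (m, n)` for some integers `m, n` and `h''(x̃) ≠ 0`,
`h''(y) ≠ 0`, then `1` is not an eigenvalue of the derivative of `G_A` at
`(x, y)`, i.e. the corresponding fixed point of the induced torus map is
non-degenerate. -/
theorem eggbeater_fixed_points_nondegenerate
    (h : ℝ → ℝ) (hd1 : Differentiable ℝ h) (hd2 : Differentiable ℝ (deriv h))
    (A : ℝ) (hA : 0 < A) (x y : ℝ) :
    ∃ L : ℝ × ℝ →L[ℝ] ℝ × ℝ,
      HasFDerivAt (EggbeaterLift h A) L (x, y) ∧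
      (∀ v : ℝ × ℝ,
        L v = (EggbeaterJacobian h A x y 0 0 * v.1 + EggbeaterJacobian h A x y 0 1 * v.2,
               EggbeaterJacobian h A x y 1 0 * v.1 + EggbeaterJacobian h A x y 1 1 * v.2)) ∧
      (EggbeaterJacobian h A x y).det = 1 ∧
      (EggbeaterJacobian h A x y - 1).det =
        2 * A ^ 2 * deriv (deriv h) (x + A * deriv h y) * deriv (deriv h) y ∧
      ((∃ m n : ℤ, EggbeaterLift h A (x, y) = (x + (m : ℝ), y + (n : ℝ))) →
        deriv (deriv h) (x + A * deriv h y) ≠ 0 → deriv (deriv h) y ≠ 0 →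
        ∀ v : ℝ × ℝ, L v = v → v = 0) :=
  eggbeater_fixed_points_nondegenerate_general h hd2 A hA x y
end
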